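/- arXiv:2403.19619 — 3 statements merged into one kernel-verified Lean document; each statement's English description precedes it below -/
import Mathlib

section
/- Let V and V' be finite-dimensional real inner product spaces with dim V = m, and let B : V' → V be a surjective linear map. Let ω_V be the Riemannian volume form on V and ω_⊥ the volume form on (ker B)^⊥ ⊆ V'. Then the pullback of ω_V along the restriction of B to (ker B)^⊥ equals ±√(det(B B^T)) · ω_⊥. -/
/-!
In orthonormal bases both volume forms are determinants, so the pullback is `det M • ω_⊥` up to
sign, where `M` is the matrix of `B` restricted to `(ker B)ᗮ`. Since `Bᵀ` takes values in
`(ker B)ᗮ = range Bᵀ`, restricting does not change `B Bᵀ`, whose determinant is therefore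
`det (M Mᵀ) = (det M)²`.
-/

open Module LinearMap

section Adjoint

variable {𝕜 E F : Type*} [RCLike 𝕜] [NormedAddCommGroup E] [InnerProductSpace 𝕜 E]
  [NormedAddCommGroup F] [InnerProductSpace 𝕜 F] [FiniteDimensional 𝕜 E] [FiniteDimensional 𝕜 F]

lemma Submodule.adjoint_subtype_apply_of_mem (K : Submodule 𝕜 E) {v : E} (hv : v ∈ K) :
    adjoint K.subtype v = ⟨v, hv⟩ :=
  ext_inner_right 𝕜 fun w => by rw [adjoint_inner_left]; rfl

lemma LinearMap.comp_subtype_comp_adjoint_of_range_adjoint_le (B : E →ₗ[𝕜] F)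
    {K : Submodule 𝕜 E} (hK : range (adjoint B) ≤ K) :
    (B ∘ₗ K.subtype) ∘ₗ adjoint (B ∘ₗ K.subtype) = B ∘ₗ adjoint B := by
  ext v
  rw [adjoint_comp, comp_apply, comp_apply, comp_apply,
    K.adjoint_subtype_apply_of_mem (hK (mem_range_self _ v))]
  rfl

end Adjoint

lemma Module.Basis.det_comp_basis_eq_det_toMatrix {R M N ι : Type*} [CommRing R]
    [AddCommGroup M] [Module R M] [AddCommGroup N] [Module R N] [Fintype ι] [DecidableEq ι]
    (e : Basis ι R M) (f : Basis ι R N) (C : M →ₗ[R] N) :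
    f.det (C ∘ e) = (LinearMap.toMatrix e f C).det := by
  rw [Basis.det_apply]
  congr 1
  ext i j
  rw [Basis.toMatrix_apply, LinearMap.toMatrix_apply, Function.comp_apply]

section VolumeForm

variable {E F : Type*} [NormedAddCommGroup E] [InnerProductSpace ℝ E]
  [NormedAddCommGroup F] [InnerProductSpace ℝ F] {n : ℕ}

lemma LinearMap.det_comp_adjoint_eq_sq {ι : Type*} [Fintype ι] [DecidableEq ι]
    [FiniteDimensional ℝ E] [FiniteDimensional ℝ F]
    (e : OrthonormalBasis ι ℝ E) (f : OrthonormalBasis ι ℝ F) (C : E →ₗ[ℝ] F) :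
    LinearMap.det (C ∘ₗ adjoint C) = (LinearMap.toMatrix e.toBasis f.toBasis C).det ^ 2 := by
  rw [← det_toMatrix f.toBasis, toMatrix_comp _ e.toBasis, toMatrix_adjoint e f, Matrix.det_mul,
    Matrix.det_conjTranspose, star_trivial, sq]

lemma Orientation.abs_volumeForm_comp_orthonormalBasis [FiniteDimensional ℝ E]
    [FiniteDimensional ℝ F] [Fact (finrank ℝ F = n)] (o : Orientation ℝ F (Fin n))
    (C : E →ₗ[ℝ] F) (e : OrthonormalBasis (Fin n) ℝ E) :
    |o.volumeForm (C ∘ e)| = √(LinearMap.det (C ∘ₗ adjoint C)) := by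
  let f : OrthonormalBasis (Fin n) ℝ F := (stdOrthonormalBasis ℝ F).reindex (finCongr Fact.out)
  rw [o.volumeForm_robust' f, det_comp_adjoint_eq_sq e f, Real.sqrt_sq_eq_abs, ← e.coe_toBasis,
    Basis.det_comp_basis_eq_det_toMatrix]

lemma Orientation.volumeForm_compLinearMap_eq_smul [Fact (finrank ℝ E = n)]
    [Fact (finrank ℝ F = n)] (o : Orientation ℝ F (Fin n)) (o' : Orientation ℝ E (Fin n))
    (C : E →ₗ[ℝ] F) (e : OrthonormalBasis (Fin n) ℝ E) :
    o.volumeForm.compLinearMap C = (o.volumeForm (C ∘ e) * o'.volumeForm e) • o'.volumeForm := by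
  have he : o'.volumeForm e ^ 2 = 1 := by
    rw [← sq_abs, o'.abs_volumeForm_apply_of_orthonormal, one_pow]
  conv_rhs => enter [2]; rw [o'.volumeForm.eq_smul_basis_det e.toBasis]
  rw [smul_smul, OrthonormalBasis.coe_toBasis, mul_assoc, ← sq, he, mul_one,
    (o.volumeForm.compLinearMap C).eq_smul_basis_det e.toBasis]
  rfl

theorem Orientation.exists_volumeForm_compLinearMap_eq [FiniteDimensional ℝ E]
    [FiniteDimensional ℝ F] [Fact (finrank ℝ E = n)] [Fact (finrank ℝ F = n)]
    (o : Orientation ℝ F (Fin n)) (o' : Orientation ℝ E (Fin n)) (C : E →ₗ[ℝ] F) :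
    ∃ ε : ℝ, (ε = 1 ∨ ε = -1) ∧
      o.volumeForm.compLinearMap C = (ε * √(LinearMap.det (C ∘ₗ adjoint C))) • o'.volumeForm := by
  let e : OrthonormalBasis (Fin n) ℝ E := (stdOrthonormalBasis ℝ E).reindex (finCongr Fact.out)
  set c := o.volumeForm (C ∘ e) * o'.volumeForm e
  have hc : |c| = √(LinearMap.det (C ∘ₗ adjoint C)) := by
    rw [abs_mul, o'.abs_volumeForm_apply_of_orthonormal, mul_one,
      o.abs_volumeForm_comp_orthonormalBasis]
  rw [o.volumeForm_compLinearMap_eq_smul o' C e, ← hc]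
  obtain h | h := abs_choice c
  · exact ⟨1, .inl rfl, by rw [one_mul, h]⟩
  · exact ⟨-1, .inr rfl, by rw [h, neg_one_mul, neg_neg]⟩

end VolumeForm

theorem stmt_0_general
    {V V' : Type*} [NormedAddCommGroup V] [InnerProductSpace ℝ V]
    [NormedAddCommGroup V'] [InnerProductSpace ℝ V']
    [FiniteDimensional ℝ V] [FiniteDimensional ℝ V']
    {m : ℕ} [Fact (Module.finrank ℝ V = m)]
    (B : V' →ₗ[ℝ] V)
    [Fact (Module.finrank ℝ ((LinearMap.ker B)ᗮ : Submodule ℝ V') = m)]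
    (o : Orientation ℝ V (Fin m))
    (o' : Orientation ℝ ((LinearMap.ker B)ᗮ : Submodule ℝ V') (Fin m)) :
    ∃ ε : ℝ, (ε = 1 ∨ ε = -1) ∧
      (o.volumeForm).compLinearMap (B ∘ₗ ((LinearMap.ker B)ᗮ : Submodule ℝ V').subtype)
        = (ε * Real.sqrt (LinearMap.det (B ∘ₗ (LinearMap.adjoint B)))) • o'.volumeForm := by
  rw [← B.comp_subtype_comp_adjoint_of_range_adjoint_le (orthogonal_ker B).ge]
  exact o.exists_volumeForm_compLinearMap_eq o' _

/-- Let `V` and `V'` be finite-dimensional real inner product spaces with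
`dim V = m`, and let `B : V' → V` be a surjective linear map. Let `ω_V` be the Riemannian
volume form on `V` (w.r.t. an orientation `o`) and `ω_⊥` the volume form on `(ker B)ᗮ ⊆ V'`
(w.r.t. an orientation `o'`). Then the pullback of `ω_V` along the restriction of `B` to
`(ker B)ᗮ` equals `± √(det (B Bᵀ)) • ω_⊥`. -/
theorem stmt_0
    {V V' : Type*} [NormedAddCommGroup V] [InnerProductSpace ℝ V]
    [NormedAddCommGroup V'] [InnerProductSpace ℝ V']
    [FiniteDimensional ℝ V] [FiniteDimensional ℝ V']
    {m : ℕ} [Fact (Module.finrank ℝ V = m)]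
    (B : V' →ₗ[ℝ] V) (hB : Function.Surjective B)
    [Fact (Module.finrank ℝ ((LinearMap.ker B)ᗮ : Submodule ℝ V') = m)]
    (o : Orientation ℝ V (Fin m))
    (o' : Orientation ℝ ((LinearMap.ker B)ᗮ : Submodule ℝ V') (Fin m)) :
    ∃ ε : ℝ, (ε = 1 ∨ ε = -1) ∧
      (o.volumeForm).compLinearMap (B ∘ₗ ((LinearMap.ker B)ᗮ : Submodule ℝ V').subtype)
        = (ε * Real.sqrt (LinearMap.det (B ∘ₗ (LinearMap.adjoint B)))) • o'.volumeForm :=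
  stmt_0_general B o o'
end

section
/- Let G be a Lie group with a left-invariant metric, E : G → M as above, ℓ : M → G a smooth section of E with ℓ(z) = e, and for x ∈ M let R_{ℓ(x)} be right multiplication. Define c(ξ) by dR_{ℓ(x)}^*(ω_Ker(ξ)) = c(ξ)·ω_Ker(ξ ℓ(x)^{-1}) where x = E(ξ). Then c is constant on every fiber E^{-1}(x); i.e., c(sξ) = c(ξ) for all s ∈ G^z. -/
/-! The stabilizer `G^z` preserves each fiber of `E = μ(z,·)`, so `ξ` and `sξ` use the same
section value `ℓ(x)`. Since left multiplication by `s` commutes with right multiplication by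
`ℓ(x)⁻¹` and leaves `ω_Ker` invariant, both sides of the defining identity of `c` are the same
for `ξ` and `sξ`; as `ω_Ker` does not vanish, the scalars agree. -/

theorem orbit_mul_eq_of_stabilizer {G M : Type*} [Mul G] (μ : M → G → M)
    (hmul : ∀ x ξ η, μ (μ x ξ) η = μ x (ξ * η)) {z : M} {s : G} (hs : μ z s = z) (ξ : G) :
    μ z (s * ξ) = μ z ξ := by
  rw [← hmul, hs]

theorem stmt_17_general
    {𝔤 : Type*} [NormedAddCommGroup 𝔤] [InnerProductSpace ℝ 𝔤]
    {G : Type*} [Group G] {M : Type*}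
    (μ : M → G → M)
    (hmul : ∀ x ξ η, μ (μ x ξ) η = μ x (ξ * η))
    (z : M)
    (p : ℕ)
    -- the fiberwise volume form `ω_Ker` (in left trivialization), nowhere zero
    (ω : G → (𝔤 [⋀^Fin p]→ₗ[ℝ] ℝ))
    (hne : ∀ ξ : G, ω ξ ≠ 0)
    -- invariance of `ω_Ker` under left multiplication by `G^z` (Statement 16)
    (hinv : ∀ s : G, μ z s = z → ∀ ξ : G, ω (s * ξ) = ω ξ)
    -- a section `ℓ` of `E = μ(z,·)` with `ℓ(z) = e`
    (ℓ : M → G)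
    -- `A(x)` is the left trivialization of right multiplication by `ℓ(x)`
    (A : M → (𝔤 →ₗ[ℝ] 𝔤))
    -- the defining property of the scaling function `c` :
    -- `dR_{ℓ(x)}^* (ω_Ker(ξ)) = c(ξ) • ω_Ker(ξ ℓ(x)⁻¹)` with `x = E(ξ)`
    (c : G → ℝ)
    (hc : ∀ ξ : G,
      (ω ξ).compLinearMap (A (μ z ξ)) = c ξ • ω (ξ * (ℓ (μ z ξ))⁻¹)) :
    ∀ s : G, μ z s = z → ∀ ξ : G, c (s * ξ) = c ξ := by
  intro s hs ξ
  have hfiber := orbit_mul_eq_of_stabilizer μ hmul hs ξ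
  apply smul_left_injective ℝ (hne (ξ * (ℓ (μ z ξ))⁻¹))
  calc c (s * ξ) • ω (ξ * (ℓ (μ z ξ))⁻¹)
      = c (s * ξ) • ω (s * ξ * (ℓ (μ z (s * ξ)))⁻¹) := by rw [hfiber, mul_assoc, hinv s hs]
    _ = (ω (s * ξ)).compLinearMap (A (μ z (s * ξ))) := (hc _).symm
    _ = (ω ξ).compLinearMap (A (μ z ξ)) := by rw [hfiber, hinv s hs]
    _ = c ξ • ω (ξ * (ℓ (μ z ξ))⁻¹) := hc ξ

/-- Let `G` be a Lie group with a left-invariant metric, `E = μ(z,·)` the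
orbit map, `ℓ : M → G` a smooth section of `E` with `ℓ(z) = e`, and for `x ∈ M` let
`R_{ℓ(x)}` be right multiplication, whose left trivialization is a linear map
`A(x) : 𝔤 → 𝔤`. Define `c(ξ)` by `dR_{ℓ(x)}^*(ω_Ker(ξ)) = c(ξ) • ω_Ker(ξ ℓ(x)⁻¹)` where
`x = E(ξ)`. If `ω_Ker` is invariant under left multiplication by the stabilizer `G^z`
(and nowhere zero), then `c` is constant on every fiber `E⁻¹(x)`: `c(sξ) = c(ξ)` for all
`s ∈ G^z`. -/
theorem stmt_17
    {𝔤 : Type*} [NormedAddCommGroup 𝔤] [InnerProductSpace ℝ 𝔤] [FiniteDimensional ℝ 𝔤]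
    {G : Type*} [Group G] {M : Type*}
    (μ : M → G → M)
    (hone : ∀ x, μ x 1 = x)
    (hmul : ∀ x ξ η, μ (μ x ξ) η = μ x (ξ * η))
    (z : M)
    (p : ℕ)
    -- the fiberwise volume form `ω_Ker` (in left trivialization), nowhere zero
    (ω : G → (𝔤 [⋀^Fin p]→ₗ[ℝ] ℝ))
    (hne : ∀ ξ : G, ω ξ ≠ 0)
    -- invariance of `ω_Ker` under left multiplication by `G^z` (Statement 16)
    (hinv : ∀ s : G, μ z s = z → ∀ ξ : G, ω (s * ξ) = ω ξ)
    -- a section `ℓ` of `E = μ(z,·)` with `ℓ(z) = e`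
    (ℓ : M → G)
    (hℓ : ∀ x : M, μ z (ℓ x) = x)
    (hℓz : ℓ z = 1)
    -- `A(x)` is the left trivialization of right multiplication by `ℓ(x)`
    (A : M → (𝔤 →ₗ[ℝ] 𝔤))
    -- the defining property of the scaling function `c` :
    -- `dR_{ℓ(x)}^* (ω_Ker(ξ)) = c(ξ) • ω_Ker(ξ ℓ(x)⁻¹)` with `x = E(ξ)`
    (c : G → ℝ)
    (hc : ∀ ξ : G,
      (ω ξ).compLinearMap (A (μ z ξ)) = c ξ • ω (ξ * (ℓ (μ z ξ))⁻¹)) :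
    ∀ s : G, μ z s = z → ∀ ξ : G, c (s * ξ) = c ξ :=
  stmt_17_general μ hmul z p ω hne hinv ℓ A c hc
end

section
/- Let G̃ be a fundamental solution of a left-invariant operator L̃ on a Lie group G with left Haar measure ω_G, assumed unique (so that it satisfies G̃(gξ, gη) = G̃(ξ,η) for all g). Fix a surjection E : G → M as orbit map of a transitive right action with stabilizer G^z, and suppose the fiberwise volume form ω_Ker on E-fibers is invariant under left multiplication by G^z. Then for x,y ∈ M with x ≠ y, the saturated integral ∫_{E^{-1}(y)} G̃(ξ, η) ω_Ker(η) is independent of the choice of ξ ∈ E^{-1}(x). -/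
open MeasureTheory

/- Two points `ξ, ξ'` of the same fibre of `E = μ z` differ by the stabilizer element
`s = ξ' ξ⁻¹`, which maps `ξ` to `ξ'`.  Left invariance of `Γ̃` turns `Γ̃(ξ, η)` into
`Γ̃(ξ', sη)`, and the change of variables `η ↦ sη` leaves the fibre measure unchanged. -/

theorem apply_mul_inv_eq_self_of_apply_eq {G M : Type*} [Group G] (μ : M → G → M)
    (hone : ∀ x, μ x 1 = x) (hmul : ∀ x ξ η, μ (μ x ξ) η = μ x (ξ * η))
    {z : M} {ξ ξ' : G} (h : μ z ξ' = μ z ξ) : μ z (ξ' * ξ⁻¹) = z := by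
  rw [← hmul, h, hmul, mul_inv_cancel, hone]

theorem integral_comp_mul_left_of_map_eq {G E : Type*} [Group G] [MeasurableSpace G]
    [MeasurableMul G] [NormedAddCommGroup E] [NormedSpace ℝ E] {ν : Measure G} {s : G}
    (hν : ν.map (s * ·) = ν) (f : G → E) :
    ∫ η, f (s * η) ∂ν = ∫ η, f η ∂ν := by
  conv_rhs => rw [← hν]
  exact ((MeasurableEquiv.mulLeft s).measurableEmbedding.integral_map f).symm

theorem stmt_18_general
    {G : Type*} [Group G] [MeasurableSpace G] [MeasurableMul G]
    {M : Type*}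
    (μ : M → G → M)
    (hone : ∀ x, μ x 1 = x)
    (hmul : ∀ x ξ η, μ (μ x ξ) η = μ x (ξ * η))
    (z : M)
    -- the left-invariant fundamental solution
    (Γ : G → G → ℝ)
    (hΓ : ∀ g ξ η : G, Γ (g * ξ) (g * η) = Γ ξ η)
    -- the fiberwise measures `ν y` on the fibers `E⁻¹(y)` induced by `ω_Ker`
    (ν : M → Measure G)
    -- invariance of the fiber measure under left multiplication by `G^z`
    (hν : ∀ y : M, ∀ s : G, μ z s = z → (ν y).map (fun η => s * η) = ν y)
    (x y : M)
    (ξ ξ' : G) (hξ : μ z ξ = x) (hξ' : μ z ξ' = x) :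
    ∫ η, Γ ξ η ∂(ν y) = ∫ η, Γ ξ' η ∂(ν y) := by
  have hs : μ z (ξ' * ξ⁻¹) = z :=
    apply_mul_inv_eq_self_of_apply_eq μ hone hmul (hξ'.trans hξ.symm)
  calc ∫ η, Γ ξ η ∂(ν y) = ∫ η, Γ ξ' (ξ' * ξ⁻¹ * η) ∂(ν y) := by
        congr 1 with η
        rw [← hΓ (ξ' * ξ⁻¹) ξ η, inv_mul_cancel_right]
    _ = ∫ η, Γ ξ' η ∂(ν y) :=
        integral_comp_mul_left_of_map_eq (hν y _ hs) (Γ ξ')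

/-- Let `Γ̃` be a fundamental solution of a left-invariant operator on a
Lie group `G`, assumed unique, so that it is left-invariant: `Γ̃(gξ, gη) = Γ̃(ξ,η)` for all
`g`. Fix a surjection `E : G → M`, `E(ξ) = μ(z,ξ)`, as orbit map of a transitive right
action with stabilizer `G^z`, and suppose the fiberwise volume measure `ν(y)` on the
`E`-fibers (corresponding to `ω_Ker`) is invariant under left multiplication by `G^z`.
Then, for `x, y ∈ M` with `x ≠ y`, the saturated integral `∫_{E⁻¹(y)} Γ̃(ξ, η) dν(y)(η)`
is independent of the choice of `ξ ∈ E⁻¹(x)`. -/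
theorem stmt_18
    {G : Type*} [Group G] [MeasurableSpace G] [MeasurableMul G]
    {M : Type*}
    (μ : M → G → M)
    (hone : ∀ x, μ x 1 = x)
    (hmul : ∀ x ξ η, μ (μ x ξ) η = μ x (ξ * η))
    (htrans : ∀ x y : M, ∃ g : G, μ x g = y)
    (z : M)
    -- the left-invariant fundamental solution
    (Γ : G → G → ℝ)
    (hΓ : ∀ g ξ η : G, Γ (g * ξ) (g * η) = Γ ξ η)
    -- the fiberwise measures `ν y` on the fibers `E⁻¹(y)` induced by `ω_Ker`
    (ν : M → Measure G)
    (hsupp : ∀ y : M, ∀ᵐ η ∂(ν y), μ z η = y)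
    -- invariance of the fiber measure under left multiplication by `G^z`
    (hν : ∀ y : M, ∀ s : G, μ z s = z → (ν y).map (fun η => s * η) = ν y)
    -- integrability along the fibers
    (hint : ∀ (x y : M) (ξ : G), μ z ξ = x → Integrable (fun η => Γ ξ η) (ν y))
    (x y : M) (hxy : x ≠ y)
    (ξ ξ' : G) (hξ : μ z ξ = x) (hξ' : μ z ξ' = x) :
    ∫ η, Γ ξ η ∂(ν y) = ∫ η, Γ ξ' η ∂(ν y) :=
  stmt_18_general μ hone hmul z Γ hΓ ν hν x y ξ ξ' hξ hξ'
end
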